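/- arXiv:2206.03081 — 2 statements merged into one kernel-verified Lean document; each statement's English description precedes it below -/
import Mathlib

section
/- Under the hypotheses of the previous closed-loop construction with λ > 0, setting ε = min{1, λ} > 0, every C^1 solution satisfies d/dt V(z(t),ξ(t)) ≤ v(t)ᵀ ẏ(t) − ε ‖ẏ(t)‖², i.e., the resulting closed-loop system is nonlinear output strictly negative imaginary (OSNI) with degree of output strictness ε. -/
/-!
Write `Φ (z, y) = V1 (z + A11⁻¹ p y) + V2 y`, so that `V = Φ (z, (ξ1, ξ2)) + ½ ‖ξ3‖²`.
Along a solution, `d/dt V` is the `z`-partial of `Φ` applied to `ż`, plus the `y`-partial applied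
to `ẏ`, plus `ξ3 ⬝ ξ̇3`. The `y`-partial applied to `ẏ` is `g1 ⬝ ξ̇1 + g2 ⬝ ξ̇2`. The `z`-partial is
`dV1` at `α = z + A11⁻¹ p y`, and `ż = A11 α`, so that term is `≤ 0`. Inserting
`g1 = v1 - ξ̇1`, `ξ3 = ξ̇2` and `ξ̇3 = v2 - g2 - λ ξ̇2`, the `g2` terms cancel and what remains is
`vᵀẏ - ‖ξ̇1‖² - λ ‖ξ̇2‖² ≤ vᵀẏ - min 1 λ ‖ẏ‖²`.
-/

open scoped Matrix

theorem dotProduct_apply_single_one {ι R : Type*} [Fintype ι] [DecidableEq ι] [CommSemiring R]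
    [TopologicalSpace R] (L : (ι → R) →L[R] R) (u : ι → R) :
    (fun i => L (Pi.single i 1)) ⬝ᵥ u = L u := by
  conv_rhs => rw [pi_eq_sum_univ' u]
  simp [dotProduct, mul_comm]

theorem dotProduct_self_eq_sum_sq {ι R : Type*} [Fintype ι] [CommSemiring R] (u : ι → R) :
    u ⬝ᵥ u = ∑ i, u i ^ 2 := by
  simp only [dotProduct, sq]

@[fun_prop]
theorem Matrix.differentiable_mulVec {𝕜 m n : Type*} [NontriviallyNormedField 𝕜] [CompleteSpace 𝕜]
    [Fintype m] [Fintype n] (A : Matrix m n 𝕜) : Differentiable 𝕜 (A *ᵥ ·) :=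
  (LinearMap.toContinuousLinearMap A.mulVecLin).differentiable

section Partial

variable {𝕜 E F G : Type*} [NontriviallyNormedField 𝕜]
  [NormedAddCommGroup E] [NormedSpace 𝕜 E] [NormedAddCommGroup F] [NormedSpace 𝕜 F]
  [NormedAddCommGroup G] [NormedSpace 𝕜 G]

theorem fderiv_prod_apply_eq_add {Φ : E × F → G} {a : E} {b : F}
    (hΦ : DifferentiableAt 𝕜 Φ (a, b)) (u : E) (w : F) :
    fderiv 𝕜 Φ (a, b) (u, w) =
      fderiv 𝕜 (fun x => Φ (x, b)) a u + fderiv 𝕜 (fun y => Φ (a, y)) b w := by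
  have hleft : HasFDerivAt (fun x => Φ (x, b)) ((fderiv 𝕜 Φ (a, b)).comp (.inl 𝕜 E F)) a :=
    hΦ.hasFDerivAt.comp a (hasFDerivAt_prodMk_left a b)
  have hright : HasFDerivAt (fun y => Φ (a, y)) ((fderiv 𝕜 Φ (a, b)).comp (.inr 𝕜 E F)) b :=
    hΦ.hasFDerivAt.comp b (hasFDerivAt_prodMk_right a b)
  rw [hleft.fderiv, hright.fderiv, ContinuousLinearMap.comp_apply,
    ContinuousLinearMap.comp_apply, ← map_add]
  simp

theorem DifferentiableAt.hasDerivAt_comp_prodMk {Φ : E × F → G} {x : 𝕜 → E} {y : 𝕜 → F}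
    {x' : E} {y' : F} {t : 𝕜} (hΦ : DifferentiableAt 𝕜 Φ (x t, y t)) (hx : HasDerivAt x x' t)
    (hy : HasDerivAt y y' t) :
    HasDerivAt (fun s => Φ (x s, y s))
      (fderiv 𝕜 (fun a => Φ (a, y t)) (x t) x' + fderiv 𝕜 (fun b => Φ (x t, b)) (y t) y') t := by
  rw [← fderiv_prod_apply_eq_add hΦ]
  exact hΦ.hasFDerivAt.comp_hasDerivAt t (hx.prodMk hy)

end Partial

theorem HasDerivAt.half_sum_sq {ι : Type*} [Fintype ι] {f : ℝ → ι → ℝ} {f' : ι → ℝ} {t : ℝ}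
    (hf : HasDerivAt f f' t) :
    HasDerivAt (fun s => (1 / 2) * ∑ i, f s i ^ 2) (f t ⬝ᵥ f') t := by
  have h := (HasDerivAt.fun_sum (u := Finset.univ) fun i _ =>
    (hasDerivAt_pi.1 hf i).fun_pow 2).const_mul (1 / 2 : ℝ)
  refine h.congr_deriv ?_
  simp only [dotProduct, Finset.mul_sum]
  congr! 1 with i
  push_cast
  ring

theorem add_dotProduct_le_sub_min_mul {ι κ : Type*} [Fintype ι] [Fintype κ] {c : ℝ}
    (hc : c ≤ 0) (lam : ℝ) (u v₁ : ι → ℝ) (w v₂ g : κ → ℝ) :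
    c + ((v₁ - u) ⬝ᵥ u + g ⬝ᵥ w) + w ⬝ᵥ (v₂ - g - lam • w) ≤
      (v₁ ⬝ᵥ u + v₂ ⬝ᵥ w) - min 1 lam * (∑ i, u i ^ 2 + ∑ i, w i ^ 2) := by
  simp only [dotProduct_comm w, sub_dotProduct, smul_dotProduct, smul_eq_mul,
    dotProduct_self_eq_sum_sq]
  have hmin_u : min 1 lam * ∑ i, u i ^ 2 ≤ 1 * ∑ i, u i ^ 2 :=
    mul_le_mul_of_nonneg_right (min_le_left 1 lam) (by positivity)
  have hmin_w : min 1 lam * ∑ i, w i ^ 2 ≤ lam * ∑ i, w i ^ 2 :=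
    mul_le_mul_of_nonneg_right (min_le_right 1 lam) (by positivity)
  linarith

theorem stmt2_general (m p1 p2 : ℕ)
    (A11 : Matrix (Fin m) (Fin m) ℝ) (hA : IsUnit A11.det)
    (p : ((Fin p1 → ℝ) × (Fin p2 → ℝ)) → (Fin m → ℝ)) (hpC : ContDiff ℝ 1 p)
    (V1 : (Fin m → ℝ) → ℝ) (hV1C : ContDiff ℝ 1 V1)
    (hV1dec : ∀ α : Fin m → ℝ, fderiv ℝ V1 α (A11.mulVec α) ≤ 0)
    (V2 : ((Fin p1 → ℝ) × (Fin p2 → ℝ)) → ℝ) (hV2C : ContDiff ℝ 1 V2)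
    (lam : ℝ)
    (V : (Fin m → ℝ) → (Fin p1 → ℝ) → (Fin p2 → ℝ) → (Fin p2 → ℝ) → ℝ)
    (hV : ∀ z ξ1 ξ2 ξ3, V z ξ1 ξ2 ξ3 =
      V1 (z + A11⁻¹.mulVec (p (ξ1, ξ2))) + V2 (ξ1, ξ2) + (1/2) * ∑ i, (ξ3 i)^2)
    -- the gradients of V with respect to ξ1 and ξ2
    (g1 : (Fin m → ℝ) → (Fin p1 → ℝ) → (Fin p2 → ℝ) → (Fin p2 → ℝ) → (Fin p1 → ℝ))
    (hg1 : ∀ z ξ1 ξ2 ξ3 i, g1 z ξ1 ξ2 ξ3 i =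
      fderiv ℝ (fun a => V z a ξ2 ξ3) ξ1 (Pi.single i 1))
    (g2 : (Fin m → ℝ) → (Fin p1 → ℝ) → (Fin p2 → ℝ) → (Fin p2 → ℝ) → (Fin p2 → ℝ))
    (hg2 : ∀ z ξ1 ξ2 ξ3 i, g2 z ξ1 ξ2 ξ3 i =
      fderiv ℝ (fun a => V z ξ1 a ξ3) ξ2 (Pi.single i 1))
    -- a C¹ solution of the closed-loop system
    (z : ℝ → Fin m → ℝ) (ξ1 : ℝ → Fin p1 → ℝ) (ξ2 ξ3 : ℝ → Fin p2 → ℝ)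
    (v1 : ℝ → Fin p1 → ℝ) (v2 : ℝ → Fin p2 → ℝ)
    (z' : ℝ → Fin m → ℝ) (ξ1' : ℝ → Fin p1 → ℝ) (ξ2' ξ3' : ℝ → Fin p2 → ℝ)
    (hz : ∀ t, HasDerivAt z (z' t) t) (hdξ1 : ∀ t, HasDerivAt ξ1 (ξ1' t) t)
    (hdξ2 : ∀ t, HasDerivAt ξ2 (ξ2' t) t) (hdξ3 : ∀ t, HasDerivAt ξ3 (ξ3' t) t)
    (hz' : ∀ t, z' t = A11.mulVec (z t) + p (ξ1 t, ξ2 t))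
    (hξ1' : ∀ t, ξ1' t = v1 t - g1 (z t) (ξ1 t) (ξ2 t) (ξ3 t))
    (hξ2' : ∀ t, ξ2' t = ξ3 t)
    (hξ3' : ∀ t, ξ3' t = v2 t - g2 (z t) (ξ1 t) (ξ2 t) (ξ3 t) - lam • ξ3 t) :
    ∀ t : ℝ, 0 ≤ t →
      deriv (fun s => V (z s) (ξ1 s) (ξ2 s) (ξ3 s)) t ≤
        ((∑ i, v1 t i * ξ1' t i) + ∑ i, v2 t i * ξ2' t i)
          - min 1 lam * ((∑ i, (ξ1' t i)^2) + ∑ i, (ξ2' t i)^2) := by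
  intro t _
  set Φ : (Fin m → ℝ) × ((Fin p1 → ℝ) × (Fin p2 → ℝ)) → ℝ :=
    fun q => V1 (q.1 + A11⁻¹ *ᵥ p q.2) + V2 q.2
  have hΦ : Differentiable ℝ Φ := by
    have := hV1C.differentiable one_ne_zero
    have := hV2C.differentiable one_ne_zero
    have := hpC.differentiable one_ne_zero
    fun_prop
  have hVΦ : ∀ z ξ1 ξ2 ξ3, V z ξ1 ξ2 ξ3 = Φ (z, (ξ1, ξ2)) + (1 / 2) * ∑ i, ξ3 i ^ 2 := hV
  have hg1Φ : ∀ z a b c,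
      g1 z a b c = fun i => fderiv ℝ (fun x => Φ (z, (x, b))) a (Pi.single i 1) :=
    fun z a b c => funext fun i => by simp only [hg1, hVΦ, fderiv_add_const]
  have hg2Φ : ∀ z a b c,
      g2 z a b c = fun i => fderiv ℝ (fun x => Φ (z, (a, x))) b (Pi.single i 1) :=
    fun z a b c => funext fun i => by simp only [hg2, hVΦ, fderiv_add_const]
  set α := z t + A11⁻¹ *ᵥ p (ξ1 t, ξ2 t)
  have hz_partial : fderiv ℝ (fun a => Φ (a, (ξ1 t, ξ2 t))) (z t) = fderiv ℝ V1 α := by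
    simp only [Φ, fderiv_add_const, fderiv_comp_add_right, α]
  have hy_partial : fderiv ℝ (fun b => Φ (z t, b)) (ξ1 t, ξ2 t) (ξ1' t, ξ2' t) =
      g1 (z t) (ξ1 t) (ξ2 t) (ξ3 t) ⬝ᵥ ξ1' t + g2 (z t) (ξ1 t) (ξ2 t) (ξ3 t) ⬝ᵥ ξ2' t := by
    rw [fderiv_prod_apply_eq_add (Φ := fun b => Φ (z t, b)) (by fun_prop), hg1Φ, hg2Φ,
      dotProduct_apply_single_one, dotProduct_apply_single_one]
  have hderiv : HasDerivAt (fun s => V (z s) (ξ1 s) (ξ2 s) (ξ3 s))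
      (fderiv ℝ V1 α (z' t) + (g1 (z t) (ξ1 t) (ξ2 t) (ξ3 t) ⬝ᵥ ξ1' t
        + g2 (z t) (ξ1 t) (ξ2 t) (ξ3 t) ⬝ᵥ ξ2' t) + ξ3 t ⬝ᵥ ξ3' t) t := by
    simp only [hVΦ]
    rw [← hz_partial, ← hy_partial]
    exact (hΦ.differentiableAt.hasDerivAt_comp_prodMk (hz t)
      ((hdξ1 t).prodMk (hdξ2 t))).add (hdξ3 t).half_sum_sq
  have hdissip : fderiv ℝ V1 α (z' t) ≤ 0 := by
    have hz'_eq : z' t = A11 *ᵥ α := by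
      rw [hz', Matrix.mulVec_add, Matrix.mulVec_mulVec, Matrix.mul_nonsing_inv _ hA,
        Matrix.one_mulVec]
    exact hz'_eq ▸ hV1dec α
  have hg1_eq : g1 (z t) (ξ1 t) (ξ2 t) (ξ3 t) = v1 t - ξ1' t := by rw [hξ1' t, sub_sub_cancel]
  rw [hderiv.deriv, hg1_eq, hξ3' t, ← hξ2' t]
  exact add_dotProduct_le_sub_min_mul hdissip lam _ _ _ _ _

/-- STATEMENT 1: the closed-loop system
ż = A11 z + p(y), ξ̇1 = v1 − (∂V/∂ξ1)ᵀ, ξ̇2 = ξ3, ξ̇3 = v2 − (∂V/∂ξ2)ᵀ − λξ3,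
y = (ξ1,ξ2), with V(z,ξ) = V1(z + A11⁻¹p(y)) + V2(y) + (1/2)‖ξ3‖², satisfies
along any C¹ solution, for all t ≥ 0,
d/dt V ≤ vᵀẏ − ε‖ẏ‖² with ε = min{1, λ} > 0, i.e. the closed-loop system is
nonlinear OSNI with degree of output strictness ε = min{1,λ}.
(STATEMENT 2; here λ > 0 and ‖ẏ‖² = ‖ξ̇1‖² + ‖ξ̇2‖².) -/
theorem stmt2 (m p1 p2 : ℕ)
    (A11 : Matrix (Fin m) (Fin m) ℝ) (hA : IsUnit A11.det)
    (p : ((Fin p1 → ℝ) × (Fin p2 → ℝ)) → (Fin m → ℝ)) (hpC : ContDiff ℝ 1 p)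
    (hp0 : p 0 = 0)
    (V1 : (Fin m → ℝ) → ℝ) (hV1C : ContDiff ℝ 1 V1)
    (hV1dec : ∀ α : Fin m → ℝ, fderiv ℝ V1 α (A11.mulVec α) ≤ 0)
    (V2 : ((Fin p1 → ℝ) × (Fin p2 → ℝ)) → ℝ) (hV2C : ContDiff ℝ 1 V2)
    (lam : ℝ) (hlam : 0 < lam)
    (V : (Fin m → ℝ) → (Fin p1 → ℝ) → (Fin p2 → ℝ) → (Fin p2 → ℝ) → ℝ)
    (hV : ∀ z ξ1 ξ2 ξ3, V z ξ1 ξ2 ξ3 =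
      V1 (z + A11⁻¹.mulVec (p (ξ1, ξ2))) + V2 (ξ1, ξ2) + (1/2) * ∑ i, (ξ3 i)^2)
    -- the gradients of V with respect to ξ1 and ξ2
    (g1 : (Fin m → ℝ) → (Fin p1 → ℝ) → (Fin p2 → ℝ) → (Fin p2 → ℝ) → (Fin p1 → ℝ))
    (hg1 : ∀ z ξ1 ξ2 ξ3 i, g1 z ξ1 ξ2 ξ3 i =
      fderiv ℝ (fun a => V z a ξ2 ξ3) ξ1 (Pi.single i 1))
    (g2 : (Fin m → ℝ) → (Fin p1 → ℝ) → (Fin p2 → ℝ) → (Fin p2 → ℝ) → (Fin p2 → ℝ))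
    (hg2 : ∀ z ξ1 ξ2 ξ3 i, g2 z ξ1 ξ2 ξ3 i =
      fderiv ℝ (fun a => V z ξ1 a ξ3) ξ2 (Pi.single i 1))
    -- a C¹ solution of the closed-loop system
    (z : ℝ → Fin m → ℝ) (ξ1 : ℝ → Fin p1 → ℝ) (ξ2 ξ3 : ℝ → Fin p2 → ℝ)
    (v1 : ℝ → Fin p1 → ℝ) (v2 : ℝ → Fin p2 → ℝ)
    (z' : ℝ → Fin m → ℝ) (ξ1' : ℝ → Fin p1 → ℝ) (ξ2' ξ3' : ℝ → Fin p2 → ℝ)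
    (hz : ∀ t, HasDerivAt z (z' t) t) (hdξ1 : ∀ t, HasDerivAt ξ1 (ξ1' t) t)
    (hdξ2 : ∀ t, HasDerivAt ξ2 (ξ2' t) t) (hdξ3 : ∀ t, HasDerivAt ξ3 (ξ3' t) t)
    (hz' : ∀ t, z' t = A11.mulVec (z t) + p (ξ1 t, ξ2 t))
    (hξ1' : ∀ t, ξ1' t = v1 t - g1 (z t) (ξ1 t) (ξ2 t) (ξ3 t))
    (hξ2' : ∀ t, ξ2' t = ξ3 t)
    (hξ3' : ∀ t, ξ3' t = v2 t - g2 (z t) (ξ1 t) (ξ2 t) (ξ3 t) - lam • ξ3 t) :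
    ∀ t : ℝ, 0 ≤ t →
      deriv (fun s => V (z s) (ξ1 s) (ξ2 s) (ξ3 s)) t ≤
        ((∑ i, v1 t i * ξ1' t i) + ∑ i, v2 t i * ξ2' t i)
          - min 1 lam * ((∑ i, (ξ1' t i)^2) + ∑ i, (ξ2' t i)^2) :=
  stmt2_general m p1 p2 A11 hA p hpC V1 hV1C hV1dec V2 hV2C lam V hV g1 hg1 g2 hg2 z ξ1 ξ2 ξ3 v1 v2
    z' ξ1' ξ2' ξ3' hz hdξ1 hdξ2 hdξ3 hz' hξ1' hξ2' hξ3'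
end

section
/- Consider the closed-loop interconnection of the plant ż = −z + ξ1²ξ2, ξ̇1 = w1 + 4zξ1ξ2 − 4ξ1³ξ2² − (4/3)ξ1^{1/3}, ξ̇2 = ξ3, ξ̇3 = w2 + 2zξ1² − 2ξ1⁴ξ2 − 2ξ2 − ξ3, with the uncertainty ẋ_σ1 = −x_σ1³ + ξ1, ẋ_σ2 = −x_σ2 + ξ2, and feedback w1 = x_σ1, w2 = x_σ2. Then along any C^1 solution, the function W = (z − ξ1²ξ2)² + ξ1^{4/3} + ξ2² + (1/2)ξ3² + (1/4)x_σ1⁴ + (1/2)x_σ2² − ξ1 x_σ1 − ξ2 x_σ2 satisfies Ẇ = −2ż² − ξ̇1² − ξ̇2² − ẋ_σ1² − ẋ_σ2² ≤ 0. -/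
/-!
Since `|x|^{4/3}` is differentiable everywhere (also at `0`) with derivative `(4/3) x^{1/3}`,
`W` is differentiable along any solution and the chain rule gives `Ẇ`. Substituting the
closed-loop dynamics, the cross terms cancel and `Ẇ` collapses to minus a sum of squares.
-/

/-- The real cube root of `x`. -/
noncomputable def realCbrt (x : ℝ) : ℝ :=
  if 0 ≤ x then x ^ ((1:ℝ)/3) else -((-x) ^ ((1:ℝ)/3))

lemma realCbrt_eq_abs_rpow_mul (x : ℝ) : realCbrt x = |x| ^ ((1:ℝ)/3 - 1) * x := by
  have key : ∀ u : ℝ, 0 < u → u ^ ((1:ℝ)/3) = u ^ ((1:ℝ)/3 - 1) * u := fun u hu => by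
    rw [Real.rpow_sub_one hu.ne', div_mul_cancel₀ _ hu.ne']
  rcases lt_trichotomy x 0 with hx | rfl | hx
  · rw [realCbrt, if_neg hx.not_ge, abs_of_neg hx, key (-x) (neg_pos.mpr hx)]
    ring
  · simp [realCbrt]
  · rw [realCbrt, if_pos hx.le, abs_of_pos hx, key x hx]

lemma hasDerivAt_abs_rpow_four_thirds (x : ℝ) :
    HasDerivAt (fun y : ℝ => |y| ^ ((4:ℝ)/3)) ((4/3) * realCbrt x) x := by
  convert hasDerivAt_abs_rpow x (p := (4:ℝ)/3) (by norm_num) using 1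
  rw [realCbrt_eq_abs_rpow_mul]
  norm_num [mul_assoc]

lemma hasDerivAt_lyapunov {z ξ1 ξ2 ξ3 xσ1 xσ2 : ℝ → ℝ} {z' ξ1' ξ2' ξ3' xσ1' xσ2' t : ℝ}
    (hz : HasDerivAt z z' t) (hξ1 : HasDerivAt ξ1 ξ1' t) (hξ2 : HasDerivAt ξ2 ξ2' t)
    (hξ3 : HasDerivAt ξ3 ξ3' t) (hxσ1 : HasDerivAt xσ1 xσ1' t)
    (hxσ2 : HasDerivAt xσ2 xσ2' t) :
    HasDerivAt (fun s => (z s - (ξ1 s)^2 * ξ2 s)^2 + |ξ1 s| ^ ((4:ℝ)/3)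
          + (ξ2 s)^2 + (1/2) * (ξ3 s)^2 + (1/4) * (xσ1 s)^4 + (1/2) * (xσ2 s)^2
          - ξ1 s * xσ1 s - ξ2 s * xσ2 s)
      (2 * (z t - (ξ1 t)^2 * ξ2 t) * (z' - (2 * ξ1 t * ξ1' * ξ2 t + (ξ1 t)^2 * ξ2'))
        + (4/3) * realCbrt (ξ1 t) * ξ1' + 2 * ξ2 t * ξ2' + ξ3 t * ξ3'
        + (xσ1 t)^3 * xσ1' + xσ2 t * xσ2'
        - (ξ1' * xσ1 t + ξ1 t * xσ1') - (ξ2' * xσ2 t + ξ2 t * xσ2')) t := by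
  have hW := ((((((((hz.sub ((hξ1.pow 2).mul hξ2)).pow 2).add
    ((hasDerivAt_abs_rpow_four_thirds (ξ1 t)).comp t hξ1)).add (hξ2.pow 2)).add
    ((hξ3.pow 2).const_mul (1/2))).add ((hxσ1.pow 4).const_mul (1/4))).add
    ((hxσ2.pow 2).const_mul (1/2))).sub (hξ1.mul hxσ1)).sub (hξ2.mul hxσ2)
  refine hW.congr_deriv ?_
  simp only [Pi.sub_apply, Pi.mul_apply, Pi.pow_apply]
  ring

/-- for the closed-loop interconnection of the example plant (with
feedback w1 = x_σ1, w2 = x_σ2) and the OSNI uncertainty, the function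
W = (z − ξ1²ξ2)² + |ξ1|^{4/3} + ξ2² + (1/2)ξ3² + (1/4)x_σ1⁴ + (1/2)x_σ2²
    − ξ1 x_σ1 − ξ2 x_σ2
satisfies Ẇ = −2ż² − ξ̇1² − ξ̇2² − ẋ_σ1² − ẋ_σ2² ≤ 0 along any C¹ solution. -/
theorem stmt11 (z ξ1 ξ2 ξ3 xσ1 xσ2 z' ξ1' ξ2' ξ3' xσ1' xσ2' : ℝ → ℝ)
    (hz : ∀ t, HasDerivAt z (z' t) t)
    (hξ1 : ∀ t, HasDerivAt ξ1 (ξ1' t) t)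
    (hξ2 : ∀ t, HasDerivAt ξ2 (ξ2' t) t)
    (hξ3 : ∀ t, HasDerivAt ξ3 (ξ3' t) t)
    (hxσ1 : ∀ t, HasDerivAt xσ1 (xσ1' t) t)
    (hxσ2 : ∀ t, HasDerivAt xσ2 (xσ2' t) t)
    (hz' : ∀ t, z' t = -(z t) + (ξ1 t)^2 * ξ2 t)
    (hξ1' : ∀ t, ξ1' t = xσ1 t + 4 * z t * ξ1 t * ξ2 t - 4 * (ξ1 t)^3 * (ξ2 t)^2
      - (4/3) * realCbrt (ξ1 t))
    (hξ2' : ∀ t, ξ2' t = ξ3 t)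
    (hξ3' : ∀ t, ξ3' t = xσ2 t + 2 * z t * (ξ1 t)^2 - 2 * (ξ1 t)^4 * ξ2 t
      - 2 * ξ2 t - ξ3 t)
    (hxσ1' : ∀ t, xσ1' t = -(xσ1 t)^3 + ξ1 t)
    (hxσ2' : ∀ t, xσ2' t = -(xσ2 t) + ξ2 t) :
    ∀ t : ℝ,
      deriv (fun s => (z s - (ξ1 s)^2 * ξ2 s)^2 + |ξ1 s| ^ ((4:ℝ)/3)
          + (ξ2 s)^2 + (1/2) * (ξ3 s)^2 + (1/4) * (xσ1 s)^4 + (1/2) * (xσ2 s)^2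
          - ξ1 s * xσ1 s - ξ2 s * xσ2 s) t
        = -2 * (z' t)^2 - (ξ1' t)^2 - (ξ2' t)^2 - (xσ1' t)^2 - (xσ2' t)^2 ∧
      deriv (fun s => (z s - (ξ1 s)^2 * ξ2 s)^2 + |ξ1 s| ^ ((4:ℝ)/3)
          + (ξ2 s)^2 + (1/2) * (ξ3 s)^2 + (1/4) * (xσ1 s)^4 + (1/2) * (xσ2 s)^2
          - ξ1 s * xσ1 s - ξ2 s * xσ2 s) t ≤ 0 := by
  intro t
  have hW := hasDerivAt_lyapunov (hz t) (hξ1 t) (hξ2 t) (hξ3 t) (hxσ1 t) (hxσ2 t)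
  have hdissipation : deriv (fun s => (z s - (ξ1 s)^2 * ξ2 s)^2 + |ξ1 s| ^ ((4:ℝ)/3)
          + (ξ2 s)^2 + (1/2) * (ξ3 s)^2 + (1/4) * (xσ1 s)^4 + (1/2) * (xσ2 s)^2
          - ξ1 s * xσ1 s - ξ2 s * xσ2 s) t
        = -2 * (z' t)^2 - (ξ1' t)^2 - (ξ2' t)^2 - (xσ1' t)^2 - (xσ2' t)^2 := by
    rw [hW.deriv, hz' t, hξ1' t, hξ2' t, hξ3' t, hxσ1' t, hxσ2' t]
    ring
  refine ⟨hdissipation, hdissipation ▸ ?_⟩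
  linarith [sq_nonneg (z' t), sq_nonneg (ξ1' t), sq_nonneg (ξ2' t),
    sq_nonneg (xσ1' t), sq_nonneg (xσ2' t)]
end
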